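/- arXiv:2004.09881 — 3 statements merged into one kernel-verified Lean document; each statement's English description precedes it below -/
import Mathlib

section
/- For every polynomial function P : [0,1]^q → ℝ of total degree at most β* and all x, y ∈ [0,1]^q, one has |P(x) − P(y)| ≤ 4 √q (β*)² · ‖x − y‖_∞ · sup_{t ∈ [0,1]^q} |P(t)|. -/
/-!
Restricted to a segment of the cube, a polynomial of total degree `≤ n` becomes a univariate
polynomial of degree `≤ n`, so Markov's inequality (extremality of the Chebyshev polynomial)
bounds its derivative at an endpoint by `2 n² M`, where `M` is the sup of `|P|` on the cube.
Thus `|dP_t (z - t)| ≤ 2 n² M` for all `t, z` in the cube. Taking `z` and `z'` to be the corners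
selected by the signs of the partial derivatives gives `∑ᵢ |∂ᵢ P(t)| = dP_t (z - z') ≤ 4 n² M`,
which is the operator norm of `dP_t` for the maximum norm. The mean value theorem then gives
`|P x - P y| ≤ 4 n² M ‖x - y‖_∞`.
-/

open Set Polynomial

namespace Polynomial

theorem abs_derivative_eval_one_le {n : ℕ} {p : ℝ[X]} (hp : p.natDegree ≤ n) {M : ℝ}
    (hb : ∀ x ∈ Icc (-1 : ℝ) 1, |p.eval x| ≤ M) :
    |(derivative p).eval 1| ≤ n ^ 2 * M := by
  rcases (abs_nonneg _).trans (hb 1 (by norm_num)) |>.eq_or_lt with hM | hM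
  · have hp0 : p = 0 := p.eq_zero_of_infinite_isRoot <|
      (Icc_infinite (by norm_num : (-1 : ℝ) < 1)).mono fun x hx => abs_nonpos_iff.mp (hM ▸ hb x hx)
    simp [hp0, ← hM]
  have hupper (r : ℝ[X]) (hr : r.natDegree ≤ n) (hrb : ∀ x ∈ Icc (-1 : ℝ) 1, |r.eval x| ≤ M) :
      (derivative r).eval 1 ≤ n ^ 2 * M := by
    have h := Chebyshev.eval_iterate_derivative_le_of_forall_abs_le_one (k := 1) le_rfl
      (P := C M⁻¹ * r) (by rw [degree_C_mul (inv_ne_zero hM.ne')]; exact degree_le_of_natDegree_le hr)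
      fun x hx => by simpa [abs_mul, abs_of_pos hM, inv_mul_le_one₀ hM] using hrb x hx
    have hT := Chebyshev.derivative_T_eval_one (R := ℝ) n
    simp only [Function.iterate_one, derivative_C_mul, eval_mul, eval_C, Int.cast_natCast] at h hT
    rw [hT, inv_mul_le_iff₀ hM] at h
    linarith
  refine abs_le.mpr ⟨?_, hupper p hp hb⟩
  have := hupper (-p) (by rwa [natDegree_neg]) (by simpa using hb)
  simp only [derivative_neg, eval_neg] at this
  linarith

theorem abs_derivative_eval_zero_le {n : ℕ} {p : ℝ[X]} (hp : p.natDegree ≤ n) {M : ℝ}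
    (hb : ∀ x ∈ Icc (0 : ℝ) 1, |p.eval x| ≤ M) :
    |(derivative p).eval 0| ≤ 2 * n ^ 2 * M := by
  set g : ℝ[X] := C 2⁻¹ * (1 - X)
  have hg (x : ℝ) : g.eval x = (1 - x) / 2 := by
    simp only [g, eval_mul, eval_C, eval_sub, eval_one, eval_X]; ring
  have hdeg : (p.comp g).natDegree ≤ n :=
    natDegree_comp_le.trans <| by
      have : g.natDegree ≤ 1 := by simp only [g]; compute_degree
      nlinarith
  have h := abs_derivative_eval_one_le hdeg fun x hx => by
    rw [eval_comp, hg]; exact hb _ ⟨by linarith [hx.2], by linarith [hx.1]⟩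
  have hder : (derivative (p.comp g)).eval 1 = -((derivative p).eval 0 / 2) := by
    simp only [g, derivative_comp, derivative_C_mul, derivative_sub, derivative_one, derivative_X,
      eval_mul, eval_C, eval_comp, eval_sub, eval_one, eval_X, eval_zero, sub_self, mul_zero]
    ring
  rw [hder, abs_neg, abs_div, abs_two] at h
  linarith

end Polynomial

namespace ContinuousLinearMap

variable {σ : Type*} [Fintype σ] [DecidableEq σ]

theorem apply_eq_sum_mul_apply_single (L : (σ → ℝ) →L[ℝ] ℝ) (v : σ → ℝ) :
    L v = ∑ i, v i * L (Pi.single i 1) := by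
  conv_lhs => rw [← Finset.univ_sum_single v]
  rw [map_sum]
  refine Finset.sum_congr rfl fun i _ => ?_
  rw [← smul_eq_mul, ← map_smul, ← Pi.single_smul, smul_eq_mul, mul_one]

theorem sum_abs_apply_single_le {L : (σ → ℝ) →L[ℝ] ℝ} {C : ℝ}
    (h : ∀ z ∈ Icc (0 : σ → ℝ) 1, ∀ z' ∈ Icc (0 : σ → ℝ) 1, L (z - z') ≤ C) :
    ∑ i, |L (Pi.single i 1)| ≤ C := by
  -- `z - (1 - z)` is the sign vector of the coefficients `L (Pi.single i 1)`.
  set z : σ → ℝ := fun i => if 0 ≤ L (Pi.single i 1) then 1 else 0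
  have hz : z ∈ Icc (0 : σ → ℝ) 1 := by
    constructor <;> intro i <;> simp only [z, Pi.zero_apply, Pi.one_apply] <;> split <;> norm_num
  have hz' : 1 - z ∈ Icc (0 : σ → ℝ) 1 := by
    constructor <;> intro i <;> simp only [z, Pi.sub_apply, Pi.zero_apply, Pi.one_apply] <;>
      split <;> norm_num
  convert h z hz (1 - z) hz' using 1
  rw [apply_eq_sum_mul_apply_single]
  refine Finset.sum_congr rfl fun i _ => ?_
  simp only [z, Pi.sub_apply, Pi.one_apply]
  split_ifs with hi
  · rw [abs_of_nonneg hi]; ring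
  · rw [abs_of_neg (not_le.mp hi)]; ring

theorem norm_le_of_apply_sub_le {L : (σ → ℝ) →L[ℝ] ℝ} {C : ℝ}
    (h : ∀ z ∈ Icc (0 : σ → ℝ) 1, ∀ z' ∈ Icc (0 : σ → ℝ) 1, L (z - z') ≤ C) : ‖L‖ ≤ C := by
  have hsum := sum_abs_apply_single_le h
  refine L.opNorm_le_bound ((Finset.sum_nonneg fun i _ => abs_nonneg _).trans hsum) fun v => ?_
  calc ‖L v‖ = |∑ i, v i * L (Pi.single i 1)| := by
        rw [apply_eq_sum_mul_apply_single, Real.norm_eq_abs]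
    _ ≤ ∑ i, ‖v‖ * |L (Pi.single i 1)| := by
      refine (Finset.abs_sum_le_sum_abs _ _).trans (Finset.sum_le_sum fun i _ => ?_)
      rw [abs_mul, ← Real.norm_eq_abs]
      exact mul_le_mul_of_nonneg_right (norm_le_pi_norm v i) (abs_nonneg _)
    _ ≤ C * ‖v‖ := by rw [← Finset.mul_sum, mul_comm]; gcongr

end ContinuousLinearMap

namespace MvPolynomial

variable {σ : Type*}

noncomputable def restrictLine (P : MvPolynomial σ ℝ) (a v : σ → ℝ) : ℝ[X] :=
  aeval (fun i => Polynomial.C (a i) + Polynomial.C (v i) * Polynomial.X) P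

theorem eval_restrictLine (P : MvPolynomial σ ℝ) (a v : σ → ℝ) (s : ℝ) :
    (P.restrictLine a v).eval s = eval (a + s • v) P := by
  rw [restrictLine, ← Polynomial.coe_aeval_eq_eval, comp_aeval_apply, ← aeval_eq_eval]
  congr 2
  funext i
  simp [mul_comm (v i)]

theorem natDegree_restrictLine_le (P : MvPolynomial σ ℝ) (a v : σ → ℝ) :
    (P.restrictLine a v).natDegree ≤ P.totalDegree := by
  simpa [restrictLine] using aeval_natDegree_le (n := 1) P le_rfl _ fun i => by compute_degree

variable [Fintype σ]

theorem differentiable_eval (P : MvPolynomial σ ℝ) : Differentiable ℝ (fun x => eval x P) :=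
  fun x => (AnalyticOnNhd.eval_mvPolynomial P x (mem_univ _)).differentiableAt

theorem derivative_restrictLine_eval_zero (P : MvPolynomial σ ℝ) (a v : σ → ℝ) :
    (derivative (P.restrictLine a v)).eval 0 = fderiv ℝ (fun x => eval x P) a v := by
  have hline : HasDerivAt (fun s : ℝ => a + s • v) v 0 := by
    simpa using ((hasDerivAt_id (0 : ℝ)).smul_const v).const_add a
  have hP := (P.differentiable_eval (a + (0 : ℝ) • v)).hasFDerivAt
  rw [← Polynomial.deriv]
  simp_rw [eval_restrictLine]
  simpa [Function.comp_def] using (hP.comp_hasDerivAt (0 : ℝ) hline).deriv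

theorem abs_fderiv_eval_apply_sub_le {K : Set (σ → ℝ)} (hK : Convex ℝ K) {P : MvPolynomial σ ℝ}
    {n : ℕ} (hP : P.totalDegree ≤ n) {M : ℝ} (hM : ∀ x ∈ K, |eval x P| ≤ M) {t z : σ → ℝ}
    (ht : t ∈ K) (hz : z ∈ K) :
    |fderiv ℝ (fun x => eval x P) t (z - t)| ≤ 2 * n ^ 2 * M := by
  rw [← derivative_restrictLine_eval_zero]
  refine abs_derivative_eval_zero_le ((natDegree_restrictLine_le P t _).trans hP) fun s hs => ?_
  rw [eval_restrictLine]
  exact hM _ (hK.add_smul_sub_mem ht hz hs)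

theorem norm_fderiv_eval_le {P : MvPolynomial σ ℝ} {n : ℕ} (hP : P.totalDegree ≤ n) {M : ℝ}
    (hM : ∀ x ∈ Icc (0 : σ → ℝ) 1, |eval x P| ≤ M) {t : σ → ℝ} (ht : t ∈ Icc (0 : σ → ℝ) 1) :
    ‖fderiv ℝ (fun x => eval x P) t‖ ≤ 4 * n ^ 2 * M := by
  classical
  refine ContinuousLinearMap.norm_le_of_apply_sub_le fun z hz z' hz' => ?_
  have h := abs_fderiv_eval_apply_sub_le (convex_Icc 0 1) hP hM ht hz
  have h' := abs_fderiv_eval_apply_sub_le (convex_Icc 0 1) hP hM ht hz'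
  rw [show z - z' = (z - t) - (z' - t) by abel, map_sub]
  linarith [le_abs_self (fderiv ℝ (fun x => eval x P) t (z - t)),
    neg_abs_le (fderiv ℝ (fun x => eval x P) t (z' - t))]

end MvPolynomial

theorem IsCompact.le_biSup_of_continuousOn {α : Type*} [TopologicalSpace α] {s : Set α}
    (hs : IsCompact s) {f : α → ℝ} (hf : ContinuousOn f s) {t : α} (ht : t ∈ s) :
    f t ≤ ⨆ x ∈ s, f x := by
  refine le_ciSup₂ (f := fun x (_ : x ∈ s) => f x) ?_ t ht
  obtain ⟨C, hC⟩ := hs.bddAbove_image hf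
  refine ⟨max C 0, ?_⟩
  simp only [mem_upperBounds, mem_iUnion, mem_range]
  rintro _ ⟨x, hx, rfl⟩
  exact le_max_of_le_left (hC (mem_image_of_mem f hx))

/-- For every polynomial function `P : [0,1]^q → ℝ` of total degree at most `β*` and all
`x, y ∈ [0,1]^q`, one has
`|P(x) − P(y)| ≤ 4 √q (β*)² ⬝ ‖x − y‖_∞ ⬝ sup_{t ∈ [0,1]^q} |P(t)|`.
(The norm on `Fin q → ℝ` is the maximum norm.) -/
theorem stmt7 (βs q : ℕ) (P : MvPolynomial (Fin q) ℝ) (hP : P.totalDegree ≤ βs)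
    (x y : Fin q → ℝ) (hx : x ∈ Set.Icc (0 : Fin q → ℝ) 1)
    (hy : y ∈ Set.Icc (0 : Fin q → ℝ) 1) :
    |MvPolynomial.eval x P - MvPolynomial.eval y P|
      ≤ 4 * Real.sqrt q * (βs : ℝ) ^ 2 * ‖x - y‖ *
        ⨆ t ∈ Set.Icc (0 : Fin q → ℝ) 1, |MvPolynomial.eval t P| := by
  set M := ⨆ t ∈ Icc (0 : Fin q → ℝ) 1, |MvPolynomial.eval t P|
  have hM : ∀ t ∈ Icc (0 : Fin q → ℝ) 1, |MvPolynomial.eval t P| ≤ M := fun t ht =>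
    isCompact_Icc.le_biSup_of_continuousOn P.differentiable_eval.continuous.abs.continuousOn ht
  have hlip := (convex_Icc (0 : Fin q → ℝ) 1).norm_image_sub_le_of_norm_fderiv_le
    (fun t _ => P.differentiable_eval t) (fun t => MvPolynomial.norm_fderiv_eval_le hP hM) hy hx
  have hsqrt : ‖x - y‖ ≤ √q * ‖x - y‖ := by
    rcases Nat.eq_zero_or_pos q with rfl | hq
    · simp [Subsingleton.elim x y]
    · exact le_mul_of_one_le_left (norm_nonneg _) (Real.one_le_sqrt.mpr (by exact_mod_cast hq))
  have hM0 : 0 ≤ M := (abs_nonneg _).trans (hM x hx)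
  calc |MvPolynomial.eval x P - MvPolynomial.eval y P| ≤ 4 * βs ^ 2 * M * ‖x - y‖ := hlip
    _ ≤ 4 * βs ^ 2 * M * (√q * ‖x - y‖) := by gcongr
    _ = 4 * √q * βs ^ 2 * ‖x - y‖ * M := by ring
end

section
/- Let X_1, X_2, … be iid random vectors in [0,1]^q with density f_X bounded and bounded away from zero, let (h_n) be a sequence of positive bandwidths with h_n → 0 and log(n)/(n h_n^q) → 0, and fix d > 0. Then, almost surely, sup over all axis-parallel hypercubes I_n ⊆ [0,1]^q with edge length d h_n of |(1/n) Σ_{i=1}^n 1{X_i ∈ I_n} − P(X_1 ∈ I_n)| = o(h_n^q). Consequently, with probability converging to one, every axis-parallel hypercube I_n ⊆ [0,1]^q with edge length d h_n contains at least d_n design points among X_1,…,X_n, for some sequence d_n of order n h_n^q. -/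
/-!
For a fixed cube `C`, the number of `X_i ∈ C` is binomial with success probability
`p ≤ b |C| ≍ h^q`, so the Chernoff bound `P(|N - np| ≥ nt) ≤ 2 exp(-n s (t - p s))` (`0 ≤ s ≤ 1`)
with `t ≍ h^q` is `exp(-c n h^q) ≤ n⁻⁴` once `log n = o(n h^q)`. Every admissible cube of side
`d h` lies between an inner and an outer cube anchored at a grid of mesh `η h`; the grid has
`O(h^{-q}) = O(n)` points and the two cubes differ in mass by at most
`b ((d + η)^q - (d - η)^q) h^q`, which is small against `h^q` for small `η`. A union bound
over the grid and Borel–Cantelli give the almost sure rate. Since every admissible cube has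
mass at least `a d^q h^q`, it then eventually holds at least `a d^q n h^q / 2` points, and an
almost sure eventual event has probability tending to one.
-/

open MeasureTheory ProbabilityTheory Filter Real Finset
open scoped Classical ENNReal NNReal Topology

section HitCount

variable {Ω E : Type*}

noncomputable def hitCount (X : ℕ → Ω → E) (C : Set E) (n : ℕ) (ω : Ω) : ℕ :=
  #{i ∈ range n | X i ω ∈ C}

lemma hitCount_mono (X : ℕ → Ω → E) {C D : Set E} (hCD : C ⊆ D) (n : ℕ) (ω : Ω) :
    hitCount X C n ω ≤ hitCount X D n ω :=
  card_le_card fun _ hi => by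
    simp only [mem_filter] at hi ⊢
    exact ⟨hi.1, hCD hi.2⟩

lemma hitCount_le (X : ℕ → Ω → E) (C : Set E) (n : ℕ) (ω : Ω) : hitCount X C n ω ≤ n :=
  (card_filter_le _ _).trans (card_range n).le

lemma hitCount_eq_sum_indicator (X : ℕ → Ω → E) (C : Set E) (n : ℕ) (ω : Ω) :
    (hitCount X C n ω : ℝ) = ∑ i ∈ range n, C.indicator 1 (X i ω) := by
  simp [hitCount, Set.indicator_apply]

variable [MeasurableSpace Ω]

def deviationSet (μ : Measure Ω) (X : ℕ → Ω → E) (C : Set E) (n : ℕ) (t : ℝ) : Set Ω :=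
  {ω | n * t ≤ |(hitCount X C n ω : ℝ) - n * μ.real (X 0 ⁻¹' C)|}

variable {μ : Measure Ω} {X : ℕ → Ω → E}

lemma abs_div_sub_le_of_notMem_deviationSet {C : Set E} {n : ℕ} (hn : 0 < n) {t : ℝ} {ω : Ω}
    (hω : ω ∉ deviationSet μ X C n t) :
    |(hitCount X C n ω : ℝ) / n - μ.real (X 0 ⁻¹' C)| ≤ t := by
  have hn' : (0 : ℝ) < n := Nat.cast_pos.2 hn
  have hlt : |(hitCount X C n ω : ℝ) - n * μ.real (X 0 ⁻¹' C)| < n * t := not_le.1 hω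
  rw [show (hitCount X C n ω : ℝ) / n - μ.real (X 0 ⁻¹' C)
      = ((hitCount X C n ω : ℝ) - n * μ.real (X 0 ⁻¹' C)) / n by field_simp,
    abs_div, abs_of_pos hn', div_le_iff₀ hn']
  linarith

variable [MeasurableSpace E] [IsProbabilityMeasure μ]

lemma mgf_indicator_comp {Y : Ω → E} (hY : Measurable Y) {C : Set E} (hC : MeasurableSet C)
    (u : ℝ) : mgf (fun ω => C.indicator 1 (Y ω)) μ u = 1 + (exp u - 1) * μ.real (Y ⁻¹' C) := by
  have hexp : ∀ ω, exp (u * C.indicator 1 (Y ω)) = 1 + (exp u - 1) * (Y ⁻¹' C).indicator 1 ω := by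
    intro ω; by_cases h : Y ω ∈ C <;> simp [h]
  simp only [mgf, hexp]
  rw [integral_add (integrable_const 1) (((integrable_const 1).indicator (hY hC)).const_mul _),
    integral_const_mul, integral_indicator_one (hY hC)]
  simp

lemma mgf_hitCount_le (hmeas : ∀ i, Measurable (X i)) (hindep : iIndepFun X μ)
    (hid : ∀ i, IdentDistrib (X i) (X 0) μ μ) {C : Set E} (hC : MeasurableSet C) (n : ℕ)
    {u : ℝ} (hu : |u| ≤ 1) :
    mgf (fun ω => (hitCount X C n ω : ℝ)) μ u ≤ exp (n * μ.real (X 0 ⁻¹' C) * (u + u ^ 2)) := by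
  set p := μ.real (X 0 ⁻¹' C)
  have hind : iIndepFun (fun i ω => C.indicator (1 : E → ℝ) (X i ω)) μ :=
    hindep.comp _ fun _ => measurable_const.indicator hC
  have hmgf : ∀ i, mgf (fun ω => C.indicator 1 (X i ω)) μ u = 1 + (exp u - 1) * p := fun i => by
    rw [mgf_indicator_comp (hmeas i) hC, measureReal_def, (hid i).measure_mem_eq hC]; rfl
  have hsum : (fun ω => (hitCount X C n ω : ℝ))
      = ∑ i ∈ range n, fun ω => C.indicator 1 (X i ω) := by
    ext ω; simp [hitCount_eq_sum_indicator]
  have hbase : 0 ≤ 1 + (exp u - 1) * p := by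
    nlinarith [exp_pos u, measureReal_nonneg (μ := μ) (s := X 0 ⁻¹' C),
      measureReal_le_one (μ := μ) (s := X 0 ⁻¹' C)]
  have hexp : exp u - 1 ≤ u + u ^ 2 := by linarith [(abs_le.1 (abs_exp_sub_one_sub_id_le hu)).2]
  rw [hsum, hind.mgf_sum (fun i => (measurable_const.indicator hC).comp (hmeas i)),
    prod_congr rfl fun i _ => hmgf i, prod_const, card_range]
  calc (1 + (exp u - 1) * p) ^ n ≤ exp ((exp u - 1) * p) ^ n :=
        pow_le_pow_left₀ hbase (by linarith [add_one_le_exp ((exp u - 1) * p)]) n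
    _ = exp (n * p * (exp u - 1)) := by rw [← exp_nat_mul]; ring_nf
    _ ≤ exp (n * p * (u + u ^ 2)) := by gcongr

lemma integrable_exp_mul_hitCount (hmeas : ∀ i, Measurable (X i)) {C : Set E}
    (hC : MeasurableSet C) (n : ℕ) (u : ℝ) :
    Integrable (fun ω => exp (u * hitCount X C n ω)) μ := by
  refine integrable_exp_mul_of_mem_Icc (a := 0) (b := n) ?_ (ae_of_all _ fun ω => ?_)
  · simp_rw [hitCount_eq_sum_indicator]
    exact (Finset.measurable_sum _ fun i _ =>
      (measurable_const.indicator hC).comp (hmeas i)).aemeasurable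
  · exact ⟨by positivity, mod_cast hitCount_le X C n ω⟩

variable (hmeas : ∀ i, Measurable (X i)) (hindep : iIndepFun X μ)
  (hid : ∀ i, IdentDistrib (X i) (X 0) μ μ) {C : Set E} (hC : MeasurableSet C) (n : ℕ) (t : ℝ)
  {s : ℝ} (hs0 : 0 ≤ s) (hs1 : s ≤ 1)
include hmeas hindep hid hC hs0 hs1

lemma measureReal_hitCount_ge_le :
    μ.real {ω | n * (μ.real (X 0 ⁻¹' C) + t) ≤ hitCount X C n ω}
      ≤ exp (-(n * s * (t - μ.real (X 0 ⁻¹' C) * s))) := by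
  set p := μ.real (X 0 ⁻¹' C)
  calc _ ≤ exp (-s * (n * (p + t))) * mgf (fun ω => (hitCount X C n ω : ℝ)) μ s :=
        measure_ge_le_exp_mul_mgf _ hs0 (integrable_exp_mul_hitCount hmeas hC n s)
    _ ≤ exp (-s * (n * (p + t))) * exp (n * p * (s + s ^ 2)) := by
        gcongr
        exact mgf_hitCount_le hmeas hindep hid hC n (by rwa [abs_of_nonneg hs0])
    _ = _ := by rw [← exp_add]; ring_nf

lemma measureReal_hitCount_le_le :
    μ.real {ω | hitCount X C n ω ≤ n * (μ.real (X 0 ⁻¹' C) - t)}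
      ≤ exp (-(n * s * (t - μ.real (X 0 ⁻¹' C) * s))) := by
  set p := μ.real (X 0 ⁻¹' C)
  calc _ ≤ exp (-(-s) * (n * (p - t))) * mgf (fun ω => (hitCount X C n ω : ℝ)) μ (-s) :=
        measure_le_le_exp_mul_mgf _ (neg_nonpos.2 hs0) (integrable_exp_mul_hitCount hmeas hC n _)
    _ ≤ exp (-(-s) * (n * (p - t))) * exp (n * p * (-s + (-s) ^ 2)) := by
        gcongr
        exact mgf_hitCount_le hmeas hindep hid hC n (by rwa [abs_neg, abs_of_nonneg hs0])
    _ = _ := by rw [← exp_add]; ring_nf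

lemma measureReal_deviationSet_le {P : ℝ} (hP : μ.real (X 0 ⁻¹' C) ≤ P) :
    μ.real (deviationSet μ X C n t) ≤ 2 * exp (-(n * s * (t - P * s))) := by
  set p := μ.real (X 0 ⁻¹' C)
  have hsplit : deviationSet μ X C n t ⊆ {ω | n * (p + t) ≤ hitCount X C n ω}
      ∪ {ω | hitCount X C n ω ≤ n * (p - t)} := by
    intro ω (hω : n * t ≤ |(hitCount X C n ω : ℝ) - n * p|)
    rcases le_abs'.1 hω with h | h
    · exact Or.inr (show (hitCount X C n ω : ℝ) ≤ n * (p - t) by linarith)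
    · exact Or.inl (show n * (p + t) ≤ (hitCount X C n ω : ℝ) by linarith)
  have hexp : exp (-(n * s * (t - p * s))) ≤ exp (-(n * s * (t - P * s))) := by gcongr
  calc _ ≤ _ := measureReal_mono hsplit
    _ ≤ _ := measureReal_union_le _ _
    _ ≤ exp (-(n * s * (t - P * s))) + exp (-(n * s * (t - P * s))) := by
        gcongr
        · exact (measureReal_hitCount_ge_le hmeas hindep hid hC n t hs0 hs1).trans hexp
        · exact (measureReal_hitCount_le_le hmeas hindep hid hC n t hs0 hs1).trans hexp
    _ = _ := by ring

end HitCount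

section Density

variable {α : Type*} [MeasurableSpace α] {ρ : Measure α} {S : Set α} {f : α → ℝ}

lemma withDensity_ofReal_le_smul (hS : MeasurableSet S) {b : ℝ} (hfb : ∀ t ∈ S, f t ≤ b) :
    (ρ.restrict S).withDensity (fun t => ENNReal.ofReal (f t)) ≤ b.toNNReal • ρ := by
  calc _ ≤ (ρ.restrict S).withDensity fun _ => ENNReal.ofReal b :=
        withDensity_mono ((ae_restrict_iff' hS).2
          (ae_of_all _ fun t ht => ENNReal.ofReal_le_ofReal (hfb t ht)))
    _ = b.toNNReal • ρ.restrict S := by rw [withDensity_const]; rfl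
    _ ≤ b.toNNReal • ρ := by gcongr; exact Measure.restrict_le_self

lemma smul_restrict_le_withDensity_ofReal (hS : MeasurableSet S) {a : ℝ}
    (haf : ∀ t ∈ S, a ≤ f t) :
    a.toNNReal • ρ.restrict S ≤ (ρ.restrict S).withDensity (fun t => ENNReal.ofReal (f t)) := by
  calc _ = (ρ.restrict S).withDensity fun _ => ENNReal.ofReal a := by rw [withDensity_const]; rfl
    _ ≤ _ := withDensity_mono ((ae_restrict_iff' hS).2
          (ae_of_all _ fun t ht => ENNReal.ofReal_le_ofReal (haf t ht)))

end Density

lemma measureReal_preimage_le_of_map_le_smul {Ω F : Type*} [MeasurableSpace Ω]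
    [MeasurableSpace F] {μ : Measure Ω} {Y : Ω → F} (hY : Measurable Y) {ρ : Measure F}
    {b : ℝ≥0} (hle : μ.map Y ≤ b • ρ) {C : Set F} (hC : MeasurableSet C) (hρC : ρ C ≠ ∞) :
    μ.real (Y ⁻¹' C) ≤ b * ρ.real C := by
  rw [← map_measureReal_apply hY hC, measureReal_def, measureReal_def]
  calc _ ≤ ((b • ρ) C).toReal := ENNReal.toReal_mono
        (by simpa using ENNReal.mul_ne_top ENNReal.coe_ne_top hρC) (Measure.le_iff'.1 hle C)
    _ = _ := by simp

lemma mul_measureReal_le_of_smul_le_map {Ω F : Type*} [MeasurableSpace Ω] [MeasurableSpace F]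
    {μ : Measure Ω} [IsFiniteMeasure μ] {Y : Ω → F} (hY : Measurable Y) {ρ : Measure F}
    {a : ℝ≥0} (hle : a • ρ ≤ μ.map Y) {C : Set F} (hC : MeasurableSet C) :
    a * ρ.real C ≤ μ.real (Y ⁻¹' C) := by
  rw [← map_measureReal_apply hY hC, measureReal_def, measureReal_def]
  calc _ = ((a • ρ) C).toReal := by simp
    _ ≤ _ := ENNReal.toReal_mono (measure_ne_top _ _) (Measure.le_iff'.1 hle C)

section Cube

variable {ι : Type*}

def cube (a : ι → ℝ) (l : ℝ) : Set (ι → ℝ) := Set.Icc a fun r => a r + l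

lemma measurableSet_cube [Fintype ι] (a : ι → ℝ) (l : ℝ) : MeasurableSet (cube a l) :=
  measurableSet_Icc

lemma volume_cube [Fintype ι] (a : ι → ℝ) {l : ℝ} (hl : 0 ≤ l) :
    volume (cube a l) = ENNReal.ofReal (l ^ Fintype.card ι) := by
  simp [cube, Real.volume_Icc_pi, ENNReal.ofReal_pow hl]

lemma volume_real_cube [Fintype ι] (a : ι → ℝ) {l : ℝ} (hl : 0 ≤ l) :
    volume.real (cube a l) = l ^ Fintype.card ι := by
  rw [measureReal_def, volume_cube a hl, ENNReal.toReal_ofReal (by positivity)]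

lemma cube_sandwich {a c : ι → ℝ} {δ : ℝ} (h : ∀ r, c r ≤ a r ∧ a r ≤ c r + δ) (l : ℝ) :
    cube (fun r => c r + δ) (l - δ) ⊆ cube a l ∧ cube a l ⊆ cube c (l + δ) := by
  constructor <;> refine Set.Icc_subset_Icc (fun r => ?_) (fun r => ?_) <;> linarith [h r]

def gridPoint {N : ℕ} (δ : ℝ) (g : ι → Fin N) : ι → ℝ := fun r => (g r : ℕ) * δ

lemma exists_gridPoint_le {δ : ℝ} (hδ : 0 < δ) {a : ι → ℝ} (ha : ∀ r, 0 ≤ a r ∧ a r ≤ 1) :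
    ∃ g : ι → Fin (⌈1 / δ⌉₊ + 1), ∀ r, gridPoint δ g r ≤ a r ∧ a r ≤ gridPoint δ g r + δ := by
  have hlt : ∀ r, ⌊a r / δ⌋₊ < ⌈1 / δ⌉₊ + 1 := fun r =>
    Nat.lt_succ_of_le ((Nat.floor_le_floor (by gcongr; exact (ha r).2)).trans (Nat.floor_le_ceil _))
  refine ⟨fun r => ⟨⌊a r / δ⌋₊, hlt r⟩, fun r => ?_⟩
  simp only [gridPoint]
  constructor
  · exact (le_div_iff₀ hδ).1 (Nat.floor_le (div_nonneg (ha r).1 hδ.le))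
  · have := Nat.lt_floor_add_one (a r / δ)
    rw [div_lt_iff₀ hδ] at this
    linarith

end Cube

lemma mul_pow_le_measureReal_preimage_cube {Ω ι : Type*} [MeasurableSpace Ω] [Fintype ι]
    {μ : Measure Ω} [IsFiniteMeasure μ] {Y : Ω → ι → ℝ} (hY : Measurable Y) {c : ℝ}
    (hle : c.toNNReal • volume.restrict (Set.Icc 0 1) ≤ μ.map Y) {a : ι → ℝ} {l : ℝ}
    (ha : ∀ r, 0 ≤ a r ∧ a r + l ≤ 1) (hl : 0 ≤ l) (hc : 0 ≤ c) :
    c * l ^ Fintype.card ι ≤ μ.real (Y ⁻¹' cube a l) := by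
  have hsub : cube a l ⊆ Set.Icc 0 1 := Set.Icc_subset_Icc (fun r => (ha r).1) fun r => (ha r).2
  refine le_of_eq_of_le ?_ (mul_measureReal_le_of_smul_le_map hY hle (measurableSet_cube a l))
  rw [measureReal_restrict_apply (measurableSet_cube a l), Set.inter_eq_left.2 hsub,
    volume_real_cube a hl, Real.coe_toNNReal _ hc]

lemma abs_sub_le_of_sandwich {cL c cU pL p pU t t' : ℝ} (hc : cL ≤ c ∧ c ≤ cU)
    (hp : pL ≤ p ∧ p ≤ pU) (hL : |cL - pL| ≤ t) (hU : |cU - pU| ≤ t) (hgap : pU - pL ≤ t') :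
    |c - p| ≤ t + t' := by
  rw [abs_le] at *
  constructor <;> linarith

section GridDeviation

variable {Ω ι : Type*} [MeasurableSpace Ω] [Fintype ι] {μ : Measure Ω} [IsProbabilityMeasure μ]
  {X : ℕ → Ω → ι → ℝ}

def gridDeviationSet (μ : Measure Ω) (X : ℕ → Ω → ι → ℝ) (n : ℕ) (δ l t : ℝ) : Set Ω :=
  ⋃ g : ι → Fin (⌈1 / δ⌉₊ + 1), deviationSet μ X (cube (gridPoint δ g) (l + δ)) n t ∪
    deviationSet μ X (cube (fun r => gridPoint δ g r + δ) (l - δ)) n t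

lemma abs_hitCount_div_sub_le_of_notMem_gridDeviationSet (hmeas0 : Measurable (X 0)) {b : ℝ≥0}
    (hle : μ.map (X 0) ≤ b • volume) {n : ℕ} (hn : 0 < n) {δ l t : ℝ} (hδ : 0 < δ)
    (hδl : δ ≤ l) {ω : Ω} (hω : ω ∉ gridDeviationSet μ X n δ l t) {a : ι → ℝ}
    (ha : ∀ r, 0 ≤ a r ∧ a r + l ≤ 1) :
    |(hitCount X (cube a l) n ω : ℝ) / n - μ.real (X 0 ⁻¹' cube a l)|
      ≤ t + b * ((l + δ) ^ Fintype.card ι - (l - δ) ^ Fintype.card ι) := by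
  obtain ⟨g, hg⟩ := exists_gridPoint_le hδ fun r => ⟨(ha r).1, by linarith [ha r]⟩
  obtain ⟨hLC, hCU⟩ := cube_sandwich hg l
  simp only [gridDeviationSet, Set.mem_iUnion, Set.mem_union, not_exists, not_or] at hω
  obtain ⟨hU, hL⟩ := hω g
  have hgap : μ.real (X 0 ⁻¹' cube (gridPoint δ g) (l + δ))
      - μ.real (X 0 ⁻¹' cube (fun r => gridPoint δ g r + δ) (l - δ))
      ≤ b * ((l + δ) ^ Fintype.card ι - (l - δ) ^ Fintype.card ι) := by
    rw [← measureReal_sdiff (Set.preimage_mono (hLC.trans hCU)) (hmeas0 (measurableSet_cube _ _)),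
      ← Set.preimage_sdiff, ← volume_real_cube _ (by linarith), ← volume_real_cube _ (by linarith),
      ← measureReal_sdiff (hLC.trans hCU) (measurableSet_cube _ _) isCompact_Icc.measure_lt_top.ne]
    exact measureReal_preimage_le_of_map_le_smul hmeas0 hle
      ((measurableSet_cube _ _).diff (measurableSet_cube _ _))
      (measure_ne_top_of_subset Set.sdiff_subset isCompact_Icc.measure_lt_top.ne)
  refine abs_sub_le_of_sandwich ⟨?_, ?_⟩ ⟨?_, ?_⟩ (abs_div_sub_le_of_notMem_deviationSet hn hL)
    (abs_div_sub_le_of_notMem_deviationSet hn hU) hgap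
  · gcongr; exact hitCount_mono X hLC n ω
  · gcongr; exact hitCount_mono X hCU n ω
  · exact measureReal_mono (Set.preimage_mono hLC)
  · exact measureReal_mono (Set.preimage_mono hCU)

lemma measureReal_gridDeviationSet_le (hmeas : ∀ i, Measurable (X i)) (hindep : iIndepFun X μ)
    (hid : ∀ i, IdentDistrib (X i) (X 0) μ μ) {b : ℝ≥0} (hle : μ.map (X 0) ≤ b • volume)
    (n : ℕ) {δ l : ℝ} (hδ : 0 < δ) (hδl : δ ≤ l) (t : ℝ) {s : ℝ} (hs0 : 0 ≤ s) (hs1 : s ≤ 1) :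
    μ.real (gridDeviationSet μ X n δ l t) ≤ ((⌈1 / δ⌉₊ + 1) ^ Fintype.card ι : ℕ)
      * (4 * exp (-(n * s * (t - b * (l + δ) ^ Fintype.card ι * s)))) := by
  have hdev : ∀ (c : ι → ℝ) {l' : ℝ}, 0 ≤ l' → l' ≤ l + δ →
      μ.real (deviationSet μ X (cube c l') n t)
        ≤ 2 * exp (-(n * s * (t - b * (l + δ) ^ Fintype.card ι * s))) := by
    intro c l' h0 h1
    refine measureReal_deviationSet_le hmeas hindep hid (measurableSet_cube _ _) n t hs0 hs1 ?_
    calc _ ≤ b * volume.real (cube c l') := measureReal_preimage_le_of_map_le_smul (hmeas 0) hle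
          (measurableSet_cube _ _) isCompact_Icc.measure_lt_top.ne
      _ = b * l' ^ Fintype.card ι := by rw [volume_real_cube c h0]
      _ ≤ _ := by gcongr
  calc _ ≤ ∑ _g : ι → Fin (⌈1 / δ⌉₊ + 1),
        (2 * exp (-(n * s * (t - b * (l + δ) ^ Fintype.card ι * s)))
          + 2 * exp (-(n * s * (t - b * (l + δ) ^ Fintype.card ι * s)))) :=
      (measureReal_iUnion_fintype_le _).trans (sum_le_sum fun g _ =>
        (measureReal_union_le _ _).trans (add_le_add (hdev _ (by linarith) le_rfl)
          (hdev _ (by linarith) (by linarith))))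
    _ = _ := by
        simp only [sum_const, card_univ, Fintype.card_fun, Fintype.card_fin]
        push_cast
        ring

end GridDeviation

lemma exists_pos_le_mul_sub_pow_le (b : ℝ) {d : ℝ} (hd : 0 < d) (q : ℕ) {ε : ℝ} (hε : 0 < ε) :
    ∃ η, 0 < η ∧ η ≤ d ∧ b * ((d + η) ^ q - (d - η) ^ q) ≤ ε := by
  have hlim : Tendsto (fun η : ℝ => b * ((d + η) ^ q - (d - η) ^ q)) (𝓝[>] 0) (𝓝 0) := by
    have hcont : Continuous fun η : ℝ => b * ((d + η) ^ q - (d - η) ^ q) := by fun_prop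
    simpa using (hcont.tendsto 0).mono_left nhdsWithin_le_nhds
  obtain ⟨η, hηε, hη0, hηd⟩ := ((hlim.eventually (ge_mem_nhds hε)).and (Ioc_mem_nhdsGT hd)).exists
  exact ⟨η, hη0, hηd, hηε⟩

lemma ae_eventually_notMem_of_summable_measureReal {α : Type*} [MeasurableSpace α]
    {μ : Measure α} [IsFiniteMeasure μ] {s : ℕ → Set α} (hs : Summable fun n => μ.real (s n)) :
    ∀ᵐ x ∂μ, ∀ᶠ n in atTop, x ∉ s n := by
  refine ae_eventually_notMem (ne_of_eq_of_ne ?_ (ENNReal.ofReal_ne_top (r := ∑' n, μ.real (s n))))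
  rw [ENNReal.ofReal_tsum_of_nonneg (fun _ => measureReal_nonneg) hs]
  exact tsum_congr fun n => (ofReal_measureReal (μ := μ)).symm

section Bandwidth

variable {h : ℕ → ℝ} {q : ℕ} (hpos : ∀ n, 0 < h n)
  (hlog : Tendsto (fun n : ℕ => log n / (n * h n ^ q)) atTop (𝓝 0))
include hpos hlog

lemma tendsto_natCast_mul_pow_atTop : Tendsto (fun n : ℕ => n * h n ^ q) atTop atTop := by
  refine tendsto_atTop_mono' _ ?_ (tendsto_log_atTop.comp tendsto_natCast_atTop_atTop)
  filter_upwards [hlog.eventually_lt_const one_pos, eventually_ge_atTop 1] with n hn1 hn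
  have : (0 : ℝ) < n * h n ^ q := mul_pos (by exact_mod_cast hn) (pow_pos (hpos n) q)
  exact ((div_lt_one this).1 hn1).le

lemma eventually_exp_neg_mul_le {c : ℝ} (hc : 0 < c) :
    ∀ᶠ n : ℕ in atTop, exp (-(c * (n * h n ^ q))) ≤ ((n : ℝ) ^ 4)⁻¹ := by
  filter_upwards [hlog.eventually_lt_const (show 0 < c / 4 by positivity), eventually_ge_atTop 1]
    with n hn hn1
  have hn0 : (0 : ℝ) < n := by exact_mod_cast hn1
  have h4 : 4 * log n ≤ c * (n * h n ^ q) := by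
    rw [div_lt_iff₀ (mul_pos hn0 (pow_pos (hpos n) q))] at hn
    linarith
  calc exp (-(c * (n * h n ^ q))) ≤ exp (-(4 * log n)) := by gcongr
    _ = ((n : ℝ) ^ 4)⁻¹ := by
        rw [exp_neg, show 4 * log n = log ((n : ℝ) ^ 4) by rw [log_pow]; norm_num,
          exp_log (by positivity)]

lemma eventually_gridCard_le (hh0 : Tendsto h atTop (𝓝 0)) {η : ℝ} (hη : 0 < η) :
    ∀ᶠ n : ℕ in atTop, (((⌈1 / (η * h n)⌉₊ + 1) ^ q : ℕ) : ℝ) ≤ (3 / η) ^ q * n := by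
  filter_upwards [hh0.eventually_le_const (show 0 < 1 / η by positivity),
    (tendsto_natCast_mul_pow_atTop hpos hlog).eventually_ge_atTop 1] with n hh hnh
  have hδ : 0 < η * h n := mul_pos hη (hpos n)
  have hδ1 : 1 ≤ 1 / (η * h n) := by rw [le_div_iff₀ hδ, one_mul, ← le_div_iff₀' hη]; exact hh
  have hceil : ((⌈1 / (η * h n)⌉₊ + 1 : ℕ) : ℝ) ≤ 3 / (η * h n) := by
    have := Nat.ceil_lt_add_one (show 0 ≤ 1 / (η * h n) by positivity)
    push_cast
    rw [show 3 / (η * h n) = 3 * (1 / (η * h n)) by ring]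
    linarith
  calc (((⌈1 / (η * h n)⌉₊ + 1) ^ q : ℕ) : ℝ) ≤ (3 / (η * h n)) ^ q := by
        push_cast at hceil ⊢; gcongr
    _ = (3 / η) ^ q * (1 / h n ^ q) := by rw [div_mul_eq_div_div, div_pow, div_pow]; ring
    _ ≤ (3 / η) ^ q * n := by
        gcongr
        rw [div_le_iff₀ (pow_pos (hpos n) q)]
        linarith

lemma summable_gridCard_mul_exp (hh0 : Tendsto h atTop (𝓝 0)) {η c : ℝ} (hη : 0 < η)
    (hc : 0 < c) :
    Summable fun n : ℕ => (((⌈1 / (η * h n)⌉₊ + 1) ^ q : ℕ) : ℝ) * exp (-(c * (n * h n ^ q))) := by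
  refine Summable.of_norm_bounded_eventually
    ((Real.summable_nat_pow_inv.2 (by norm_num : 1 < 3)).mul_left ((3 / η) ^ q)) ?_
  rw [Nat.cofinite_eq_atTop]
  filter_upwards [eventually_gridCard_le hpos hlog hh0 hη, eventually_exp_neg_mul_le hpos hlog hc]
    with n hgrid hexp
  rw [norm_of_nonneg (by positivity)]
  calc _ ≤ (3 / η) ^ q * n * ((n : ℝ) ^ 4)⁻¹ := by gcongr
    _ ≤ (3 / η) ^ q * ((n : ℝ) ^ 3)⁻¹ := by
        rcases Nat.eq_zero_or_pos n with rfl | hn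
        · simp
        · rw [mul_assoc]; gcongr; field_simp; rfl

end Bandwidth

section UniformDeviation

variable {Ω ι : Type*} [MeasurableSpace Ω] [Fintype ι] {μ : Measure Ω} [IsProbabilityMeasure μ]
  {X : ℕ → Ω → ι → ℝ} (hmeas : ∀ i, Measurable (X i)) (hindep : iIndepFun X μ)
  (hid : ∀ i, IdentDistrib (X i) (X 0) μ μ) {b : ℝ≥0} (hle : μ.map (X 0) ≤ b • volume)
  {h : ℕ → ℝ} (hpos : ∀ n, 0 < h n) (hh0 : Tendsto h atTop (𝓝 0))
  (hlog : Tendsto (fun n : ℕ => log n / (n * h n ^ Fintype.card ι)) atTop (𝓝 0))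
include hmeas hindep hid hle hpos hh0 hlog

lemma summable_measureReal_gridDeviationSet {d η τ : ℝ} (hη : 0 < η) (hηd : η ≤ d) (hτ : 0 < τ) :
    Summable fun n =>
      μ.real (gridDeviationSet μ X n (η * h n) (d * h n) (τ * h n ^ Fintype.card ι)) := by
  set q := Fintype.card ι
  set B := (b : ℝ) * (d + η) ^ q
  have hB : 0 < B + 1 := by have := hη.trans_le hηd; positivity
  set s := min 1 (τ / (2 * (B + 1)))
  have hs : 0 < s := lt_min one_pos (by positivity)
  have hBs : B * s ≤ τ / 2 := calc
    B * s ≤ (B + 1) * (τ / (2 * (B + 1))) := mul_le_mul (by linarith) (min_le_right _ _) hs.le hB.le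
    _ = τ / 2 := by field_simp
  refine .of_nonneg_of_le (fun _ => measureReal_nonneg) (fun n => ?_)
    ((summable_gridCard_mul_exp hpos hlog hh0 hη (c := s * τ / 2) (by positivity)).mul_left 4)
  refine (measureReal_gridDeviationSet_le hmeas hindep hid hle n (by have := hpos n; positivity)
    (mul_le_mul_of_nonneg_right hηd (hpos n).le) _ hs.le (min_le_left _ _)).trans ?_
  have hexp : s * τ / 2 * (n * h n ^ q)
      ≤ n * s * (τ * h n ^ q - b * (d * h n + η * h n) ^ q * s) := by
    have := mul_nonneg (mul_nonneg (mul_nonneg (Nat.cast_nonneg n) hs.le)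
      (pow_pos (hpos n) q).le) (sub_nonneg.2 hBs)
    rw [← add_mul, mul_pow]
    nlinarith
  calc _ ≤ (((⌈1 / (η * h n)⌉₊ + 1) ^ q : ℕ) : ℝ) * (4 * exp (-(s * τ / 2 * (n * h n ^ q)))) := by
        gcongr
    _ = _ := by ring

theorem ae_eventually_forall_abs_hitCount_div_sub_le {d : ℝ} (hd : 0 < d) {ε : ℝ} (hε : 0 < ε) :
    ∀ᵐ ω ∂μ, ∀ᶠ n in atTop, ∀ a : ι → ℝ, (∀ r, 0 ≤ a r ∧ a r + d * h n ≤ 1) →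
      |(hitCount X (cube a (d * h n)) n ω : ℝ) / n - μ.real (X 0 ⁻¹' cube a (d * h n))|
        ≤ ε * h n ^ Fintype.card ι := by
  obtain ⟨η, hη, hηd, hgap⟩ := exists_pos_le_mul_sub_pow_le b hd (Fintype.card ι) (half_pos hε)
  filter_upwards [ae_eventually_notMem_of_summable_measureReal
    (summable_measureReal_gridDeviationSet hmeas hindep hid hle hpos hh0 hlog hη hηd (half_pos hε))]
    with ω hω
  filter_upwards [hω, eventually_gt_atTop 0] with n hn hn0 a ha
  refine (abs_hitCount_div_sub_le_of_notMem_gridDeviationSet (hmeas 0) hle hn0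
    (by have := hpos n; positivity) (mul_le_mul_of_nonneg_right hηd (hpos n).le) hn ha).trans ?_
  have := mul_le_mul_of_nonneg_right hgap (pow_pos (hpos n) (Fintype.card ι)).le
  rw [← add_mul, ← sub_mul, mul_pow, mul_pow]
  nlinarith

end UniformDeviation

lemma tendsto_measure_of_ae_eventually_mem {α : Type*} [MeasurableSpace α] {μ : Measure α}
    [IsProbabilityMeasure μ] {A : ℕ → Set α} (h : ∀ᵐ x ∂μ, ∀ᶠ n in atTop, x ∈ A n) :
    Tendsto (fun n => μ (A n)) atTop (𝓝 1) := by
  set B : ℕ → Set α := fun m => ⋂ n ≥ m, A n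
  have hB : Monotone B := fun _ _ hm =>
    Set.biInter_mono (fun _ hn => hm.trans hn) fun _ _ => le_rfl
  have hunion : μ (⋃ m, B m) = 1 := by
    refine le_antisymm prob_le_one (measure_univ (μ := μ) ▸ measure_mono_ae ?_)
    filter_upwards [h] with x hx _
    obtain ⟨m, hm⟩ := eventually_atTop.1 hx
    exact Set.mem_iUnion.2 ⟨m, Set.mem_iInter₂.2 hm⟩
  refine tendsto_of_tendsto_of_tendsto_of_le_of_le (hunion ▸ tendsto_measure_iUnion_atTop hB)
    tendsto_const_nhds (fun n => measure_mono (Set.biInter_subset_of_mem le_rfl))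
    fun _ => prob_le_one

section FromUniformBounds

variable {Ω ι : Type*} [MeasurableSpace Ω] {μ : Measure Ω} {A : ℕ → Set ι} {w : ℕ → ℝ}

lemma ae_tendsto_biSup_abs_div {F : ℕ → ι → Ω → ℝ} (hw : ∀ n, 0 < w n)
    (hF : ∀ ε > 0, ∀ᵐ ω ∂μ, ∀ᶠ n in atTop, ∀ a ∈ A n, |F n a ω| ≤ ε * w n) :
    ∀ᵐ ω ∂μ, Tendsto (fun n => (⨆ a ∈ A n, |F n a ω|) / w n) atTop (𝓝 0) := by
  filter_upwards [ae_all_iff.2 fun k : ℕ => hF (1 / (k + 1)) Nat.one_div_pos_of_nat] with ω hω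
  rw [Metric.tendsto_atTop]
  intro ε hε
  obtain ⟨k, hk⟩ := exists_nat_one_div_lt hε
  obtain ⟨N, hN⟩ := eventually_atTop.1 (hω k)
  refine ⟨N, fun n hn => ?_⟩
  have hbound : 0 ≤ 1 / ((k : ℝ) + 1) * w n := by have := hw n; positivity
  have hsup : ⨆ a ∈ A n, |F n a ω| ≤ 1 / ((k : ℝ) + 1) * w n :=
    Real.iSup_le (fun a => Real.iSup_le (hN n hn a) hbound) hbound
  have hsup0 : 0 ≤ ⨆ a ∈ A n, |F n a ω| :=
    Real.iSup_nonneg fun a => Real.iSup_nonneg fun _ => abs_nonneg _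
  rw [Real.dist_eq, sub_zero, abs_of_nonneg (div_nonneg hsup0 (hw n).le)]
  exact ((div_le_iff₀ (hw n)).2 hsup).trans_lt hk

lemma exists_tendsto_measure_forall_le_count [IsProbabilityMeasure μ] {N : ℕ → ι → Ω → ℕ}
    {p : ℕ → ι → ℝ} {c : ℝ} (hc : 0 < c) (hw : Tendsto (fun n : ℕ => n * w n) atTop atTop)
    (hlow : ∀ n, ∀ a ∈ A n, c * w n ≤ p n a)
    (hdev : ∀ᵐ ω ∂μ, ∀ᶠ n in atTop, ∀ a ∈ A n, |(N n a ω : ℝ) / n - p n a| ≤ c / 2 * w n) :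
    ∃ dn : ℕ → ℕ, (∃ κ₁ κ₂ : ℝ, 0 < κ₁ ∧ 0 < κ₂ ∧ ∀ᶠ n : ℕ in atTop,
        κ₁ * (n * w n) ≤ dn n ∧ (dn n : ℝ) ≤ κ₂ * (n * w n)) ∧
      Tendsto (fun n => μ {ω | ∀ a ∈ A n, dn n ≤ N n a ω}) atTop (𝓝 1) := by
  refine ⟨fun n => ⌊c / 2 * (n * w n)⌋₊, ⟨c / 4, c / 2, by positivity, by positivity, ?_⟩, ?_⟩
  · filter_upwards [hw.eventually_ge_atTop (4 / c)] with n hn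
    rw [div_le_iff₀ hc] at hn
    have := Nat.sub_one_lt_floor (c / 2 * (n * w n))
    exact ⟨by linarith, Nat.floor_le (by nlinarith)⟩
  · refine tendsto_measure_of_ae_eventually_mem ?_
    filter_upwards [hdev] with ω hω
    filter_upwards [hω, eventually_gt_atTop 0] with n hn hn0 a ha
    have hn0' : (0 : ℝ) < n := Nat.cast_pos.2 hn0
    have hfreq : c / 2 * w n ≤ (N n a ω : ℝ) / n := by
      linarith [(abs_le.1 (hn a ha)).1, hlow n a ha]
    refine Nat.floor_le_of_le ?_
    rw [le_div_iff₀ hn0'] at hfreq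
    linarith

end FromUniformBounds

theorem stmt13_general {Ω : Type*} [MeasurableSpace Ω] (μ : Measure Ω) [IsProbabilityMeasure μ]
    (q : ℕ) (X : ℕ → Ω → Fin q → ℝ)
    (hmeas : ∀ i, Measurable (X i))
    (hid : ∀ i, IdentDistrib (X i) (X 0) μ μ)
    (hindep : iIndepFun X μ)
    (f : (Fin q → ℝ) → ℝ)
    (hfbound : ∃ a b : ℝ, 0 < a ∧ ∀ t ∈ Set.Icc (0 : Fin q → ℝ) 1, a ≤ f t ∧ f t ≤ b)
    (hdens : Measure.map (X 0) μ
      = (volume.restrict (Set.Icc (0 : Fin q → ℝ) 1)).withDensity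
          fun t => ENNReal.ofReal (f t))
    (h : ℕ → ℝ) (hpos : ∀ n, 0 < h n) (hh0 : Tendsto h atTop (nhds 0))
    (hlog : Tendsto (fun n : ℕ => Real.log n / ((n : ℝ) * h n ^ q)) atTop (nhds 0))
    (d : ℝ) (hd : 0 < d) :
    (∀ᵐ ω ∂μ, Tendsto
      (fun n : ℕ =>
        (⨆ a ∈ {a : Fin q → ℝ | ∀ r, 0 ≤ a r ∧ a r + d * h n ≤ 1},
          |(((Finset.range n).filter
              (fun i => X i ω ∈ Set.Icc a fun r => a r + d * h n)).card : ℝ) / n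
            - (μ {ω' | X 0 ω' ∈ Set.Icc a fun r => a r + d * h n}).toReal|) / h n ^ q)
      atTop (nhds 0)) ∧
    ∃ dn : ℕ → ℕ, (∃ κ₁ κ₂ : ℝ, 0 < κ₁ ∧ 0 < κ₂ ∧ ∀ᶠ n : ℕ in atTop,
        κ₁ * ((n : ℝ) * h n ^ q) ≤ (dn n : ℝ) ∧ (dn n : ℝ) ≤ κ₂ * ((n : ℝ) * h n ^ q)) ∧
      Tendsto
        (fun n : ℕ => μ {ω | ∀ a : Fin q → ℝ, (∀ r, 0 ≤ a r ∧ a r + d * h n ≤ 1) →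
          dn n ≤ ((Finset.range n).filter
            (fun i => X i ω ∈ Set.Icc a fun r => a r + d * h n)).card})
        atTop (nhds 1) := by
  obtain ⟨fa, fb, hfa, hfab⟩ := hfbound
  have hupper : μ.map (X 0) ≤ fb.toNNReal • volume :=
    hdens ▸ withDensity_ofReal_le_smul measurableSet_Icc fun t ht => (hfab t ht).2
  have hlower : fa.toNNReal • volume.restrict (Set.Icc 0 1) ≤ μ.map (X 0) :=
    hdens ▸ smul_restrict_le_withDensity_ofReal measurableSet_Icc fun t ht => (hfab t ht).1
  have hdev (ε : ℝ) (hε : 0 < ε) := ae_eventually_forall_abs_hitCount_div_sub_le hmeas hindep hid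
    hupper hpos hh0 (by simpa using hlog) hd hε
  simp only [Fintype.card_fin] at hdev
  -- The statement decides `· ∈ Set.Icc _ _` by `Set.decidableMemIcc`, `hitCount` classically.
  have hcount : ∀ n a ω, #{i ∈ range n | X i ω ∈ Set.Icc a fun r => a r + d * h n}
      = hitCount X (cube a (d * h n)) n ω := fun n a ω => by
    simp only [hitCount, cube]; congr
  simp only [hcount]
  refine ⟨ae_tendsto_biSup_abs_div (fun n => pow_pos (hpos n) q) hdev,
    exists_tendsto_measure_forall_le_count (c := fa * d ^ q) (by positivity)
      (tendsto_natCast_mul_pow_atTop hpos hlog) (fun n a ha => ?_) (hdev _ (by positivity))⟩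
  have := mul_pow_le_measureReal_preimage_cube (hmeas 0) hlower ha
    (by have := hpos n; positivity) hfa.le
  rwa [Fintype.card_fin, mul_pow, ← mul_assoc] at this

/-- Uniform law of large numbers over small cubes.  Let `X₁, X₂, …` be iid random vectors in
`[0,1]^q` with density `f_X` bounded and bounded away from zero, let `(h_n)` be positive
bandwidths with `h_n → 0` and `log(n)/(n h_n^q) → 0`, and fix `d > 0`.  Then, almost surely,
the supremum over all axis-parallel hypercubes `I_n ⊆ [0,1]^q` with edge length `d h_n` of
`|(1/n) Σ_{i<n} 1{X_i ∈ I_n} − P(X₁ ∈ I_n)|` is `o(h_n^q)`.  Consequently, with probability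
converging to one, every such hypercube contains at least `d_n` of the points `X₁,…,X_n`,
for some sequence `d_n` of (exact) order `n h_n^q`. -/
theorem stmt13 {Ω : Type*} [MeasurableSpace Ω] (μ : Measure Ω) [IsProbabilityMeasure μ]
    (q : ℕ) (hq : 0 < q) (X : ℕ → Ω → Fin q → ℝ)
    (hmeas : ∀ i, Measurable (X i))
    (hid : ∀ i, IdentDistrib (X i) (X 0) μ μ)
    (hindep : iIndepFun X μ)
    (hcube : ∀ i ω, X i ω ∈ Set.Icc (0 : Fin q → ℝ) 1)
    (f : (Fin q → ℝ) → ℝ) (hf : Measurable f)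
    (hfbound : ∃ a b : ℝ, 0 < a ∧ ∀ t ∈ Set.Icc (0 : Fin q → ℝ) 1, a ≤ f t ∧ f t ≤ b)
    (hdens : Measure.map (X 0) μ
      = (volume.restrict (Set.Icc (0 : Fin q → ℝ) 1)).withDensity
          fun t => ENNReal.ofReal (f t))
    (h : ℕ → ℝ) (hpos : ∀ n, 0 < h n) (hh0 : Tendsto h atTop (nhds 0))
    (hlog : Tendsto (fun n : ℕ => Real.log n / ((n : ℝ) * h n ^ q)) atTop (nhds 0))
    (d : ℝ) (hd : 0 < d) :
    (∀ᵐ ω ∂μ, Tendsto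
      (fun n : ℕ =>
        (⨆ a ∈ {a : Fin q → ℝ | ∀ r, 0 ≤ a r ∧ a r + d * h n ≤ 1},
          |(((Finset.range n).filter
              (fun i => X i ω ∈ Set.Icc a fun r => a r + d * h n)).card : ℝ) / n
            - (μ {ω' | X 0 ω' ∈ Set.Icc a fun r => a r + d * h n}).toReal|) / h n ^ q)
      atTop (nhds 0)) ∧
    ∃ dn : ℕ → ℕ, (∃ κ₁ κ₂ : ℝ, 0 < κ₁ ∧ 0 < κ₂ ∧ ∀ᶠ n : ℕ in atTop,
        κ₁ * ((n : ℝ) * h n ^ q) ≤ (dn n : ℝ) ∧ (dn n : ℝ) ≤ κ₂ * ((n : ℝ) * h n ^ q)) ∧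
      Tendsto
        (fun n : ℕ => μ {ω | ∀ a : Fin q → ℝ, (∀ r, 0 ≤ a r ∧ a r + d * h n ≤ 1) →
          dn n ≤ ((Finset.range n).filter
            (fun i => X i ω ∈ Set.Icc a fun r => a r + d * h n)).card})
        atTop (nhds 1) :=
  stmt13_general μ q X hmeas hid hindep f hfbound hdens h hpos hh0 hlog d hd
end

section
/- Let U be the cdf of a nonnegative random variable with U(y) = c y^α (1 + o(1)) as y ↘ 0 for some constants c, α > 0. Let (h_n) be positive bandwidths with h_n → 0 and log(n)/(n h_n^q) → 0, let r_n = (|log(h_n)| / (n h_n^q))^{1/α}, and let (d_{H_n}) be a sequence of natural numbers with d_{H_n}/(n h_n^q) bounded away from zero. Then for all sufficiently large L > 0, (1 − U(L r_n))^{d_{H_n}} = o(h_n^q) as n → ∞. -/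
/-!
Write `D n = n h_n^q` and `x_n = |log h_n| / D n`, so that `L r_n = L x_n^{1/α}`. Since
`log n / D n → 0`, `D n → ∞`; then `n h_n ≥ D n ≥ 1` forces `|log h_n| ≤ log n`, whence
`x_n → 0⁺`. The tail condition gives `U(L r_n) ≥ (c/2) L^α x_n` for large `n`, and with
`d_{H_n} ≥ κ D n` and `1 - u ≤ e^{-u}` this yields
`(1 - U(L r_n))^{d_{H_n}} ≤ exp(-(c/2) κ L^α |log h_n|) = h_n^{(c/2) κ L^α} ≤ h_n^{q+1}`
as soon as `(c/2) κ L^α ≥ q + 1`.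
-/

open Filter Real Topology

lemma one_sub_pow_le_exp_neg_mul {u : ℝ} (hu : u ≤ 1) (d : ℕ) :
    (1 - u) ^ d ≤ exp (-(d * u)) := by
  calc (1 - u) ^ d ≤ exp (-u) ^ d := pow_le_pow_left₀ (sub_nonneg.2 hu) (one_sub_le_exp_neg u) d
    _ = exp (-(d * u)) := by rw [← exp_nat_mul, mul_neg]

lemma one_sub_pow_le_rpow_of_mul_neg_log_le {u t s : ℝ} {d : ℕ} (hu : u ≤ 1) (ht : 0 < t)
    (hd : s * -log t ≤ d * u) : (1 - u) ^ d ≤ t ^ s := by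
  calc (1 - u) ^ d ≤ exp (-(d * u)) := one_sub_pow_le_exp_neg_mul hu d
    _ ≤ exp (log t * s) := exp_le_exp.2 (by linarith)
    _ = t ^ s := (rpow_def_of_pos ht s).symm

lemma rpow_div_pow_le_self {t s : ℝ} {q : ℕ} (ht₀ : 0 < t) (ht₁ : t ≤ 1) (hs : q + 1 ≤ s) :
    t ^ s / t ^ q ≤ t := by
  rw [div_le_iff₀ (pow_pos ht₀ q), ← pow_succ']
  exact_mod_cast rpow_le_rpow_of_exponent_ge ht₀ ht₁ hs

lemma one_sub_pow_div_pow_le {u t D a κ : ℝ} {q d : ℕ} (hu₀ : 0 ≤ u) (hu₁ : u ≤ 1) (ht₀ : 0 < t)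
    (ht₁ : t < 1) (hD : 0 < D) (hκ : 0 ≤ κ) (haκ : q + 1 ≤ a * κ) (hu : a * (|log t| / D) ≤ u)
    (hd : κ * D ≤ d) : (1 - u) ^ d / t ^ q ≤ t := by
  have hdu : a * κ * -log t ≤ d * u := by
    rw [← abs_of_neg (log_neg ht₀ ht₁), ← div_mul_cancel₀ |log t| hD.ne']
    calc a * κ * (|log t| / D * D) = a * (|log t| / D) * (κ * D) := by ring
      _ ≤ u * d := mul_le_mul hu hd (by positivity) hu₀
      _ = d * u := mul_comm _ _
  exact (div_le_div_of_nonneg_right (one_sub_pow_le_rpow_of_mul_neg_log_le hu₁ ht₀ hdu)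
    (pow_pos ht₀ q).le).trans (rpow_div_pow_le_self ht₀ ht₁.le haκ)

lemma Filter.Tendsto.atTop_of_div_tendsto_zero {α : Type*} {l : Filter α} {f g : α → ℝ}
    (hg : Tendsto g l atTop) (hf : ∀ᶠ a in l, 0 < f a)
    (hgf : Tendsto (fun a => g a / f a) l (𝓝 0)) :
    Tendsto f l atTop := by
  refine tendsto_atTop_mono' l ?_ hg
  filter_upwards [hf, hgf.eventually_lt_const one_pos] with a hfa hlt
  exact ((div_lt_one hfa).1 hlt).le

lemma abs_log_le_log_of_one_le_mul_pow {t N : ℝ} {q : ℕ} (hq : q ≠ 0) (ht₀ : 0 < t) (ht₁ : t < 1)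
    (hN : 1 ≤ N * t ^ q) : |log t| ≤ log N := by
  have hN₀ : 0 < N := pos_of_mul_pos_left (one_pos.trans_le hN) (pow_pos ht₀ q).le
  have hinv : t⁻¹ ≤ N := by
    rw [inv_le_iff_one_le_mul₀ ht₀]
    exact hN.trans (mul_le_mul_of_nonneg_left (pow_le_of_le_one ht₀.le ht₁.le hq) hN₀.le)
  rw [abs_of_neg (log_neg ht₀ ht₁), ← log_inv]
  exact log_le_log (inv_pos.2 ht₀) hinv

lemma tendsto_abs_log_div_natCast_mul_pow {q : ℕ} (hq : q ≠ 0) {h : ℕ → ℝ} (hpos : ∀ n, 0 < h n)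
    (hh0 : Tendsto h atTop (𝓝 0))
    (hlog : Tendsto (fun n : ℕ => log n / (n * h n ^ q)) atTop (𝓝 0)) :
    Tendsto (fun n : ℕ => |log (h n)| / (n * h n ^ q)) atTop (𝓝[>] 0) := by
  have hD₀ : ∀ᶠ n : ℕ in atTop, 0 < (n : ℝ) * h n ^ q := by
    filter_upwards [eventually_gt_atTop 0] with n hn
    exact mul_pos (Nat.cast_pos.2 hn) (pow_pos (hpos n) q)
  have hD : Tendsto (fun n : ℕ => (n : ℝ) * h n ^ q) atTop atTop :=
    (tendsto_log_atTop.comp tendsto_natCast_atTop_atTop).atTop_of_div_tendsto_zero hD₀ hlog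
  have hh1 := hh0.eventually_lt_const one_pos
  refine tendsto_nhdsWithin_iff.2 ⟨squeeze_zero' ?_ ?_ hlog, ?_⟩
  · filter_upwards [hD₀] with n hn using div_nonneg (abs_nonneg _) hn.le
  · filter_upwards [hD₀, hh1, hD.eventually_ge_atTop 1] with n hn hn1 hN
    exact div_le_div_of_nonneg_right (abs_log_le_log_of_one_le_mul_pow hq (hpos n) hn1 hN) hn.le
  · filter_upwards [hD₀, hh1] with n hn hn1
    exact div_pos (abs_pos.2 (log_neg (hpos n) hn1).ne) hn

lemma tendsto_const_mul_rpow_nhdsGT_zero {L p : ℝ} (hL : 0 < L) (hp : 0 < p) :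
    Tendsto (fun y : ℝ => L * y ^ p) (𝓝[>] 0) (𝓝[>] 0) := by
  refine tendsto_nhdsWithin_iff.2 ⟨?_, ?_⟩
  · have : ContinuousAt (fun y : ℝ => L * y ^ p) 0 :=
      continuousAt_const.mul (continuousAt_rpow_const 0 p (Or.inr hp.le))
    simpa [zero_rpow hp.ne'] using this.tendsto.mono_left nhdsWithin_le_nhds
  · filter_upwards [self_mem_nhdsWithin] with y (hy : 0 < y)
    exact mul_pos hL (rpow_pos_of_pos hy p)

lemma Asymptotics.IsLittleO.eventually_half_mul_le {α : Type*} {l : Filter α} {f g : α → ℝ}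
    {c : ℝ} (hc : 0 < c) (hg : ∀ᶠ a in l, 0 ≤ g a) (h : (fun a => f a - c * g a) =o[l] g) :
    ∀ᶠ a in l, c / 2 * g a ≤ f a := by
  filter_upwards [h.def (half_pos hc), hg] with a ha hga
  rw [norm_eq_abs, norm_eq_abs, abs_of_nonneg hga] at ha
  linarith [(abs_le.1 ha).1]

lemma eventually_half_mul_le_of_isLittleO {β : Type*} {l : Filter β} {U : ℝ → ℝ} {c α L : ℝ}
    (hc : 0 < c) (hα : 0 < α) (hL : 0 < L)
    (hU : (fun y : ℝ => U y - c * y ^ α) =o[𝓝[>] 0] fun y : ℝ => y ^ α) {x : β → ℝ}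
    (hx : Tendsto x l (𝓝[>] 0)) :
    ∀ᶠ b in l, c / 2 * L ^ α * x b ≤ U (L * x b ^ (1 / α)) := by
  have hy := (tendsto_const_mul_rpow_nhdsGT_zero hL (one_div_pos.2 hα)).comp hx
  have hg : ∀ᶠ y : ℝ in 𝓝[>] 0, 0 ≤ y ^ α := by
    filter_upwards [self_mem_nhdsWithin] with y (hy : 0 < y) using (rpow_pos_of_pos hy α).le
  filter_upwards [hy.eventually (hU.eventually_half_mul_le hc hg),
    hx.eventually self_mem_nhdsWithin] with b hb (hxb : 0 < x b)
  rwa [Function.comp_apply, mul_rpow hL.le (rpow_nonneg hxb.le _), ← rpow_mul hxb.le,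
    one_div_mul_cancel hα.ne', rpow_one, ← mul_assoc] at hb

theorem stmt16_general (q : ℕ) (hq : 0 < q) (U : ℝ → ℝ) (c α : ℝ) (hc : 0 < c) (hα : 0 < α)
    -- U is a cdf of a nonnegative random variable
    (hU01 : ∀ y, 0 ≤ U y ∧ U y ≤ 1)
    -- U(y) = c y^α (1 + o(1)) as y ↘ 0
    (hUtail : (fun y : ℝ => U y - c * y ^ α) =o[nhdsWithin 0 (Set.Ioi 0)]
      fun y : ℝ => y ^ α)
    (h : ℕ → ℝ) (hpos : ∀ n, 0 < h n) (hh0 : Tendsto h atTop (nhds 0))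
    (hlog : Tendsto (fun n : ℕ => Real.log n / ((n : ℝ) * h n ^ q)) atTop (nhds 0))
    (dH : ℕ → ℕ)
    (hdH : ∃ κ : ℝ, 0 < κ ∧ ∀ᶠ n in atTop, κ ≤ (dH n : ℝ) / ((n : ℝ) * h n ^ q)) :
    ∃ L₀ : ℝ, 0 < L₀ ∧ ∀ L ≥ L₀,
      Tendsto
        (fun n : ℕ => (1 - U (L * (|Real.log (h n)| / ((n : ℝ) * h n ^ q)) ^ (1 / α))) ^ dH n
          / h n ^ q)
        atTop (nhds 0) := by
  obtain ⟨κ, hκ, hκev⟩ := hdH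
  have hx := tendsto_abs_log_div_natCast_mul_pow hq.ne' hpos hh0 hlog
  have hcκ : 0 < c / 2 * κ := by positivity
  refine ⟨((q + 1) / (c / 2 * κ)) ^ α⁻¹, by positivity, fun L hL => ?_⟩
  have hL₀ : 0 < L := lt_of_lt_of_le (by positivity) hL
  have hs : (q : ℝ) + 1 ≤ c / 2 * L ^ α * κ := by
    rw [ge_iff_le, rpow_inv_le_iff_of_pos (by positivity) hL₀.le hα, div_le_iff₀ hcκ] at hL
    linarith
  refine squeeze_zero' (Eventually.of_forall fun n => ?_) ?_ hh0
  · exact div_nonneg (pow_nonneg (sub_nonneg.2 (hU01 _).2) _) (pow_pos (hpos n) q).le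
  filter_upwards [eventually_half_mul_le_of_isLittleO hc hα hL₀ hUtail hx,
    eventually_gt_atTop 0, hκev, hh0.eventually_lt_const one_pos] with n hU hn hdn hn1
  have hD : 0 < (n : ℝ) * h n ^ q := mul_pos (Nat.cast_pos.2 hn) (pow_pos (hpos n) q)
  exact one_sub_pow_div_pow_le (hU01 _).1 (hU01 _).2 (hpos n) hn1 hD hκ.le hs hU
    ((le_div_iff₀ hD).1 hdn)

/-- Key tail estimate.  Let `U` be the cdf of a nonnegative random variable with
`U(y) = c y^α (1 + o(1))` as `y ↘ 0` for constants `c, α > 0`.  Let `(h_n)` be positive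
bandwidths with `h_n → 0` and `log(n)/(n h_n^q) → 0`, let
`r_n = (|log h_n| / (n h_n^q))^{1/α}`, and let `(d_{H_n})` be natural numbers with
`d_{H_n}/(n h_n^q)` bounded away from zero.  Then for all sufficiently large `L > 0`,
`(1 − U(L r_n))^{d_{H_n}} = o(h_n^q)` as `n → ∞`. -/
theorem stmt16 (q : ℕ) (hq : 0 < q) (U : ℝ → ℝ) (c α : ℝ) (hc : 0 < c) (hα : 0 < α)
    -- U is a cdf of a nonnegative random variable
    (hUmono : Monotone U) (hU01 : ∀ y, 0 ≤ U y ∧ U y ≤ 1)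
    (hUneg : ∀ y < (0 : ℝ), U y = 0) (hUlim : Tendsto U atTop (nhds 1))
    -- U(y) = c y^α (1 + o(1)) as y ↘ 0
    (hUtail : (fun y : ℝ => U y - c * y ^ α) =o[nhdsWithin 0 (Set.Ioi 0)]
      fun y : ℝ => y ^ α)
    (h : ℕ → ℝ) (hpos : ∀ n, 0 < h n) (hh0 : Tendsto h atTop (nhds 0))
    (hlog : Tendsto (fun n : ℕ => Real.log n / ((n : ℝ) * h n ^ q)) atTop (nhds 0))
    (dH : ℕ → ℕ)
    (hdH : ∃ κ : ℝ, 0 < κ ∧ ∀ᶠ n in atTop, κ ≤ (dH n : ℝ) / ((n : ℝ) * h n ^ q)) :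
    ∃ L₀ : ℝ, 0 < L₀ ∧ ∀ L ≥ L₀,
      Tendsto
        (fun n : ℕ => (1 - U (L * (|Real.log (h n)| / ((n : ℝ) * h n ^ q)) ^ (1 / α))) ^ dH n
          / h n ^ q)
        atTop (nhds 0) :=
  stmt16_general q hq U c α hc hα hU01 hUtail h hpos hh0 hlog dH hdH
end
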